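/- Let (X, μ) be a measure space, let p, q : X → ℝ be square-integrable, let a : X → ℝ satisfy a ≥ 0 almost everywhere, ∫ a dμ > 0, with a·q and a·q² integrable, and let λ₁ > 0 be a constant such that ∫ p² dμ ≥ λ₁ ∫ q² dμ. Then ∫ p² dμ + ∫ a·q² dμ − (∫ a·q dμ)²/(∫ a dμ) ≥ (λ₁/(1+λ₁))·(∫ p² dμ + ∫ q² dμ). -/

import Mathlib

/-!
Since `∫ a (q - t)² ≥ 0` for every real `t`, this quadratic polynomial in `t` has non-positive
discriminant, which is the weighted Cauchy–Schwarz inequality `(∫ a q)² ≤ (∫ a) (∫ a q²)`. Hence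
the quadratic form is at least `∫ p²`, and `λ₁ ∫ q² ≤ ∫ p²` gives `∫ p² ≥ λ₁/(1+λ₁) (∫ p² + ∫ q²)`.
-/

open MeasureTheory

namespace MeasureTheory

variable {X : Type*} [MeasurableSpace X] {μ : Measure X} {a q : X → ℝ}

theorem integral_mul_sub_const_sq (ha : Integrable a μ) (haq : Integrable (fun x => a x * q x) μ)
    (haq2 : Integrable (fun x => a x * q x ^ 2) μ) (t : ℝ) :
    ∫ x, a x * (q x - t) ^ 2 ∂μ =
      (∫ x, a x ∂μ) * t ^ 2 + (-2 * ∫ x, a x * q x ∂μ) * t + ∫ x, a x * q x ^ 2 ∂μ := by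
  have hexpand : (fun x => a x * (q x - t) ^ 2) =
      fun x => a x * q x ^ 2 - 2 * t * (a x * q x) + t ^ 2 * a x := by
    ext x; ring
  have hlin : Integrable (fun x => a x * q x ^ 2 - 2 * t * (a x * q x)) μ :=
    haq2.sub (haq.const_mul _)
  rw [hexpand, integral_add hlin (ha.const_mul _), integral_sub haq2 (haq.const_mul _),
    integral_const_mul, integral_const_mul]
  ring

theorem sq_integral_mul_le_integral_mul_integral_mul_sq (ha : Integrable a μ)
    (ha_nn : ∀ᵐ x ∂μ, 0 ≤ a x) (haq : Integrable (fun x => a x * q x) μ)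
    (haq2 : Integrable (fun x => a x * q x ^ 2) μ) :
    (∫ x, a x * q x ∂μ) ^ 2 ≤ (∫ x, a x ∂μ) * ∫ x, a x * q x ^ 2 ∂μ := by
  have hquad : ∀ t : ℝ, 0 ≤ (∫ x, a x ∂μ) * (t * t) + (-2 * ∫ x, a x * q x ∂μ) * t +
      ∫ x, a x * q x ^ 2 ∂μ := fun t => by
    rw [← sq, ← integral_mul_sub_const_sq ha haq haq2 t]
    exact integral_nonneg_of_ae (by filter_upwards [ha_nn] with x hx using by positivity)
  have := discrim_le_zero hquad
  rw [discrim] at this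
  linarith

end MeasureTheory

theorem div_one_add_mul_add_le {lam P Q : ℝ} (hlam : 0 < lam) (h : lam * Q ≤ P) :
    lam / (1 + lam) * (P + Q) ≤ P := by
  rw [div_mul_eq_mul_div, div_le_iff₀ (by linarith)]
  linarith

theorem stmt_2_general {X : Type*} [MeasurableSpace X] (μ : Measure X)
    (p q a : X → ℝ) (lam : ℝ)
    (ha_int : Integrable a μ)
    (ha_nn : ∀ᵐ x ∂μ, 0 ≤ a x) (ha_pos : 0 < ∫ x, a x ∂μ)
    (haq : Integrable (fun x => a x * q x) μ)
    (haq2 : Integrable (fun x => a x * (q x) ^ 2) μ)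
    (hlam : 0 < lam)
    (hpoinc : lam * ∫ x, (q x) ^ 2 ∂μ ≤ ∫ x, (p x) ^ 2 ∂μ) :
    (lam / (1 + lam)) * ((∫ x, (p x) ^ 2 ∂μ) + ∫ x, (q x) ^ 2 ∂μ) ≤
      (∫ x, (p x) ^ 2 ∂μ) + (∫ x, a x * (q x) ^ 2 ∂μ) -
        (∫ x, a x * q x ∂μ) ^ 2 / (∫ x, a x ∂μ) := by
  have hcs : (∫ x, a x * q x ∂μ) ^ 2 / (∫ x, a x ∂μ) ≤ ∫ x, a x * q x ^ 2 ∂μ := by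
    rw [div_le_iff₀' ha_pos]
    exact sq_integral_mul_le_integral_mul_integral_mul_sq ha_int ha_nn haq haq2
  linarith [div_one_add_mul_add_le hlam hpoinc]

/-- The coercivity estimate (4.34) in the proof of Lemma 4.1. -/
theorem stmt_2 {X : Type*} [MeasurableSpace X] (μ : Measure X)
    (p q a : X → ℝ) (lam : ℝ)
    (hp : MemLp p 2 μ) (hq : MemLp q 2 μ)
    (ha_int : Integrable a μ)
    (ha_nn : ∀ᵐ x ∂μ, 0 ≤ a x) (ha_pos : 0 < ∫ x, a x ∂μ)
    (haq : Integrable (fun x => a x * q x) μ)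
    (haq2 : Integrable (fun x => a x * (q x) ^ 2) μ)
    (hlam : 0 < lam)
    (hpoinc : lam * ∫ x, (q x) ^ 2 ∂μ ≤ ∫ x, (p x) ^ 2 ∂μ) :
    (lam / (1 + lam)) * ((∫ x, (p x) ^ 2 ∂μ) + ∫ x, (q x) ^ 2 ∂μ) ≤
      (∫ x, (p x) ^ 2 ∂μ) + (∫ x, a x * (q x) ^ 2 ∂μ) -
        (∫ x, a x * q x ∂μ) ^ 2 / (∫ x, a x ∂μ) :=
  stmt_2_general μ p q a lam ha_int ha_nn ha_pos haq haq2 hlam hpoinc
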